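/- arXiv:1004.5236 — 2 statements merged into one kernel-verified Lean document; each statement's English description precedes it below -/
import Mathlib

section
/- There is a constant c₀ > 0 and N : ℕ such that for every n ≥ N there exists a matrix A : Matrix (Fin n) (Fin n) (ZMod 2) such that every depth-2 circuit with linear output gates computing the linear operator x ↦ A.mulVec x has at least c₀ * n^2 / Real.logb 2 n wires. -/
open Matrix

/-- `g` depends only on the coordinates in `T`. -/
def DependsOnlyOn {k : ℕ} (g : (Fin k → ZMod 2) → ZMod 2) (T : Finset (Fin k)) : Prop :=
  ∀ u v : Fin k → ZMod 2, (∀ i ∈ T, u i = v i) → g u = g v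

/-- The number of nonzero entries of a matrix. -/
def nnz {α β : Type*} [Fintype α] [Fintype β] (M : Matrix α β (ZMod 2)) : ℕ :=
  (Finset.univ.filter (fun p : α × β => M p.1 p.2 ≠ 0)).card

/-!
Counting. If a circuit computes `x ↦ A x` with output layer `x ↦ C x + c`, comparing its
outputs on `0` and on the unit vectors gives `A = C * B`, where row `j` of `B` is supported on
the inputs `S j` of middle gate `j`. So `A` factors with at most as many nonzero entries as the
circuit has wires. A factorization with at most `w` nonzero entries can be moved to inner
dimension `w` and then described by two lists of `w` positions, so at most `(n w + 1) ^ (2 w)`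
matrices have one; for `w ≈ n² / (7 log₂ n)` this is less than `2 ^ n²`.
-/

open Finset Function

lemma sum_extend_zero {ι κ M : Type*} [Fintype ι] [Fintype κ] [AddCommMonoid M]
    {e : ι → κ} (he : Injective e) (f : ι → M) :
    ∑ t, extend e f 0 t = ∑ j, f j := by
  classical
  rw [← sum_subset (subset_univ (univ.map ⟨e, he⟩)), sum_map]
  · simp [he.extend_apply]
  · intro t _ ht
    refine extend_apply' _ _ _ fun ⟨j, hj⟩ => ht ?_
    simp [← hj]

lemma card_support_extend_zero_le {ι κ M : Type*} [Fintype ι] [Fintype κ] [Zero M]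
    [DecidableEq M] {e : ι → κ} (he : Injective e) (f : ι → M) :
    #{t | extend e f 0 t ≠ 0} ≤ #{j | f j ≠ 0} := by
  classical
  refine (card_le_card fun t ht => ?_).trans (card_image_le (f := e))
  simp only [mem_filter, mem_univ, true_and, mem_image] at ht ⊢
  by_cases hte : ∃ j, e j = t
  · obtain ⟨j, rfl⟩ := hte
    exact ⟨j, by rwa [he.extend_apply] at ht, rfl⟩
  · exact absurd (extend_apply' _ _ _ hte) ht

section Sparsity

variable {α β ι κ R : Type*}

lemma nnz_eq_sum_card_row [Fintype α] [Fintype β] (M : Matrix α β (ZMod 2)) :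
    nnz M = ∑ i, #{j | M i j ≠ 0} := by
  simp only [nnz, card_filter, Fintype.sum_prod_type]

lemma nnz_transpose [Fintype α] [Fintype β] (M : Matrix α β (ZMod 2)) : nnz Mᵀ = nnz M := by
  simp only [nnz, card_filter, Fintype.sum_prod_type]
  exact sum_comm

lemma card_le_nnz_of_forall_row_ne_zero [Fintype α] [Fintype β] (M : Matrix α β (ZMod 2))
    {s : Finset α} (hs : ∀ i ∈ s, ∃ j, M i j ≠ 0) : #s ≤ nnz M := by
  rw [nnz_eq_sum_card_row, card_eq_sum_ones]
  refine (sum_le_sum fun i hi => ?_).trans (sum_le_sum_of_subset (subset_univ s))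
  obtain ⟨j, hj⟩ := hs i hi
  exact card_pos.mpr ⟨j, by simpa using hj⟩

lemma nnz_submatrix_le [Fintype α] [Fintype β] [Fintype ι] [Fintype κ]
    (M : Matrix α β (ZMod 2)) {f : ι → α} {g : κ → β} (hf : Injective f)
    (hg : Injective g) : nnz (M.submatrix f g) ≤ nnz M :=
  card_le_card_of_injOn (Prod.map f g)
    (fun p hp => by simp only [coe_filter, mem_univ, true_and] at hp ⊢; exact hp)
    (hf.prodMap hg).injOn

lemma submatrix_mul_submatrix_eq_mul [Fintype ι] [Fintype κ] [NonUnitalNonAssocSemiring R]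
    (C : Matrix α ι R) (B : Matrix ι β R) {f : κ → ι} (hf : Injective f)
    (hB : ∀ j, j ∉ Set.range f → ∀ k, B j k = 0) :
    C.submatrix id f * B.submatrix f id = C * B := by
  classical
  ext i k
  rw [Matrix.mul_apply, Matrix.mul_apply, ← sum_subset (subset_univ (univ.map ⟨f, hf⟩)),
    sum_map]
  · rfl
  · intro j _ hj
    rw [hB j (by simpa using hj), mul_zero]

noncomputable def extendCols [Zero R] (e : ι → κ) (M : Matrix α ι R) : Matrix α κ R :=
  fun i => extend e (M i) 0

lemma nnz_extendCols_le [Fintype α] [Fintype ι] [Fintype κ] {e : ι → κ} (he : Injective e)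
    (M : Matrix α ι (ZMod 2)) : nnz (extendCols e M) ≤ nnz M := by
  simp only [nnz_eq_sum_card_row]
  exact sum_le_sum fun i _ => card_support_extend_zero_le he (M i)

lemma extendCols_mul_extendCols_transpose [Fintype ι] [Fintype κ] [NonUnitalNonAssocSemiring R]
    {e : ι → κ} (he : Injective e) (C : Matrix α ι R) (B : Matrix ι β R) :
    extendCols e C * (extendCols e Bᵀ)ᵀ = C * B := by
  ext i k
  simp only [Matrix.mul_apply, extendCols, Matrix.transpose_apply]
  rw [← sum_extend_zero he]
  congr! 1 with t
  rw [← Pi.mul_apply, ← extend_mul, mul_zero]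
  rfl

lemma exists_fin_mul_eq_mul_of_nnz_le [Fintype α] [Fintype β] [Fintype ι]
    (C : Matrix α ι (ZMod 2)) (B : Matrix ι β (ZMod 2)) {w : ℕ} (hB : nnz B ≤ w) :
    ∃ (C' : Matrix α (Fin w) (ZMod 2)) (B' : Matrix (Fin w) β (ZMod 2)),
      C' * B' = C * B ∧ nnz C' ≤ nnz C ∧ nnz B' ≤ nnz B := by
  classical
  let J : Finset ι := {j | ∃ k, B j k ≠ 0}
  have hJ : Fintype.card J ≤ Fintype.card (Fin w) := by
    simpa using (card_le_nnz_of_forall_row_ne_zero B (s := J) (by simp [J])).trans hB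
  obtain ⟨e⟩ := Function.Embedding.nonempty_of_card_le hJ
  let CJ := C.submatrix id ((↑) : J → ι)
  let BJ := B.submatrix ((↑) : J → ι) id
  refine ⟨extendCols e CJ, (extendCols e BJᵀ)ᵀ, ?_, ?_, ?_⟩
  · rw [extendCols_mul_extendCols_transpose e.injective]
    exact submatrix_mul_submatrix_eq_mul C B Subtype.val_injective fun j hj => by
      simpa [J] using hj
  · exact (nnz_extendCols_le e.injective CJ).trans
      (nnz_submatrix_le C injective_id Subtype.val_injective)
  · rw [nnz_transpose]
    refine (nnz_extendCols_le e.injective BJᵀ).trans ?_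
    rw [nnz_transpose]
    exact nnz_submatrix_le B Subtype.val_injective injective_id

def ofPositions [DecidableEq α] [DecidableEq β] {w : ℕ} (f : Fin w → Option (α × β)) :
    Matrix α β (ZMod 2) :=
  Matrix.of fun i j => if ∃ t, f t = some (i, j) then 1 else 0

lemma exists_ofPositions_eq [Fintype α] [Fintype β] [DecidableEq α] [DecidableEq β] {w : ℕ}
    (M : Matrix α β (ZMod 2)) (hM : nnz M ≤ w) :
    ∃ f : Fin w → Option (α × β), ofPositions f = M := by
  let l := (univ.filter fun p : α × β => M p.1 p.2 ≠ 0).toList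
  refine ⟨fun t => l[(t : ℕ)]?, ?_⟩
  ext i j
  have hl : (∃ t : Fin w, l[(t : ℕ)]? = some (i, j)) ↔ M i j ≠ 0 := by
    constructor
    · rintro ⟨t, ht⟩
      simpa [l] using List.mem_of_getElem? ht
    · intro hij
      obtain ⟨t, ht⟩ := List.mem_iff_getElem?.mp (show (i, j) ∈ l by simpa [l])
      obtain ⟨htl, -⟩ := List.getElem?_eq_some_iff.mp ht
      exact ⟨⟨t, htl.trans_le ((length_toList _).trans_le hM)⟩, ht⟩
  simp only [ofPositions, Matrix.of_apply, hl]
  split_ifs with hij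
  · exact (Fin.eq_one_of_ne_zero _ hij).symm
  · exact (not_not.mp hij).symm

lemma exists_forall_lt_nnz_add_nnz [Fintype α] [Fintype β] [DecidableEq α] [DecidableEq β]
    {w : ℕ} (hcount : (Fintype.card α * w + 1) ^ w * (w * Fintype.card β + 1) ^ w
      < 2 ^ (Fintype.card α * Fintype.card β)) :
    ∃ A : Matrix α β (ZMod 2), ∀ (ι : Type*) [Fintype ι] (C : Matrix α ι (ZMod 2))
      (B : Matrix ι β (ZMod 2)), C * B = A → w < nnz C + nnz B := by
  let D : (Fin w → Option (α × Fin w)) × (Fin w → Option (Fin w × β)) →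
      Matrix α β (ZMod 2) := fun p => ofPositions p.1 * ofPositions p.2
  have hcard : Fintype.card (Matrix α β (ZMod 2)) = 2 ^ (Fintype.card α * Fintype.card β) := by
    rw [Fintype.card_congr Matrix.of.symm]
    simp [← pow_mul, mul_comm]
  have hD : ¬ Surjective D := fun hD =>
    (Fintype.card_le_of_surjective D hD).not_gt (by simpa [hcard, Fintype.card_fun] using hcount)
  obtain ⟨A, hA⟩ := not_forall.mp hD
  refine ⟨A, fun ι _ C B hCB => ?_⟩
  by_contra! hle
  obtain ⟨C', B', hprod, hC', hB'⟩ := exists_fin_mul_eq_mul_of_nnz_le C B (w := w) (by omega)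
  obtain ⟨f, rfl⟩ := exists_ofPositions_eq (w := w) C' (by omega)
  obtain ⟨g, rfl⟩ := exists_ofPositions_eq (w := w) B' (by omega)
  exact hA ⟨(f, g), hprod.trans hCB⟩

end Sparsity

section Linearization

variable {R m n ι : Type*} [CommRing R] [Fintype n] [DecidableEq n] [Fintype ι]

def linearPart (g : (n → R) → ι → R) : Matrix ι n R :=
  Matrix.of fun j k => g (Pi.single k 1) j - g 0 j

lemma eq_mul_linearPart {A : Matrix m n R} {C : Matrix m ι R} {g : (n → R) → ι → R}
    {c : m → R} (hA : ∀ x, A *ᵥ x = C *ᵥ g x + c) : A = C * linearPart g := by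
  refine ext_of_mulVec_single fun k => ?_
  have hcol : linearPart g *ᵥ Pi.single k 1 = g (Pi.single k 1) - g 0 := by
    ext j
    simp [linearPart]
  have h0 := hA 0
  rw [mulVec_zero] at h0
  rw [← mulVec_mulVec, hcol, mulVec_sub, hA]
  linear_combination -h0

end Linearization

lemma nnz_linearPart_le {n r : ℕ} {g : (Fin n → ZMod 2) → Fin r → ZMod 2}
    {S : Fin r → Finset (Fin n)} (hS : ∀ j, DependsOnlyOn (fun x => g x j) (S j)) :
    nnz (linearPart g) ≤ ∑ j, #(S j) := by
  rw [nnz_eq_sum_card_row]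
  refine sum_le_sum fun j _ => card_le_card fun k hk => ?_
  by_contra hkS
  have hg : g (Pi.single k 1) j = g 0 j :=
    hS j _ _ fun i hi => Pi.single_eq_of_ne (ne_of_mem_of_not_mem hi hkS) 1
  exact (mem_filter.mp hk).2 (by simp [linearPart, hg])

-- `7 (log₂ n + 1)` leaves room for `(n w + 1) ^ (2 w) ≤ 2 ^ (6 w (log₂ n + 1)) < 2 ^ n²`.
def budget (n : ℕ) : ℕ := n ^ 2 / (7 * (Nat.log 2 n + 1))

lemma budget_count_lt_two_pow {n : ℕ} (hn : 1 ≤ n) :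
    (n * budget n + 1) ^ budget n * (budget n * n + 1) ^ budget n < 2 ^ (n * n) := by
  set L := Nat.log 2 n + 1
  set w := budget n
  have hwL : 7 * (L * w) ≤ n ^ 2 := by
    have := Nat.div_mul_le_self (n ^ 2) (7 * L)
    rw [show w = n ^ 2 / (7 * L) from rfl]
    linarith
  have hn2 : 1 ≤ n ^ 2 := Nat.one_le_pow _ _ hn
  have hw : w ≤ L * w := Nat.le_mul_of_pos_left w (Nat.succ_pos _)
  have hnw : n * w + 1 ≤ 2 ^ (3 * L) :=
    calc n * w + 1 ≤ n * (w + 1) := by rw [mul_add_one]; omega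
      _ ≤ n * n ^ 2 := Nat.mul_le_mul_left n (by omega)
      _ = n ^ 3 := by ring
      _ ≤ (2 ^ L) ^ 3 := Nat.pow_le_pow_left (Nat.lt_pow_succ_log_self one_lt_two n).le 3
      _ = 2 ^ (3 * L) := by ring
  calc (n * w + 1) ^ w * (w * n + 1) ^ w = (n * w + 1) ^ (2 * w) := by ring
    _ ≤ (2 ^ (3 * L)) ^ (2 * w) := Nat.pow_le_pow_left hnw _
    _ = 2 ^ (6 * (L * w)) := by rw [← pow_mul]; congr 1; ring
    _ < 2 ^ (n * n) := Nat.pow_lt_pow_right one_lt_two (by rw [← sq]; omega)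

lemma sq_div_logb_lt_budget_add_one {n : ℕ} (hn : 2 ≤ n) :
    (n : ℝ) ^ 2 / (14 * Real.logb 2 n) < budget n + 1 := by
  have hlog : (1 : ℝ) ≤ Nat.log 2 n := by exact_mod_cast Nat.log_pos one_lt_two hn
  have hL : (Nat.log 2 n : ℝ) + 1 ≤ 2 * Real.logb 2 n := by
    have : (Nat.log 2 n : ℝ) ≤ Real.logb 2 n := by exact_mod_cast Real.natLog_le_logb n 2
    linarith
  have hdiv : n ^ 2 < (budget n + 1) * (7 * (Nat.log 2 n + 1)) := by
    rw [add_mul, one_mul]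
    exact Nat.lt_div_mul_add (by positivity)
  rw [div_lt_iff₀ (by linarith)]
  calc (n : ℝ) ^ 2 < ((budget n : ℝ) + 1) * (7 * ((Nat.log 2 n : ℝ) + 1)) := by
        exact_mod_cast hdiv
    _ ≤ ((budget n : ℝ) + 1) * (14 * Real.logb 2 n) :=
        mul_le_mul_of_nonneg_left (by linarith) (by positivity)

/-- Some linear `n`-operators require `Ω(n²/log n)` wires in depth-2 circuits whose
output gates are linear (parities, possibly negated) while middle gates may be arbitrary. -/
theorem lower_bound_linear_output_gates :
    ∃ c₀ : ℝ, c₀ > 0 ∧ ∃ N : ℕ, ∀ n ≥ N,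
      ∃ A : Matrix (Fin n) (Fin n) (ZMod 2),
        ∀ (r : ℕ) (S : Fin r → Finset (Fin n))
          (h : (Fin n → ZMod 2) → (Fin r → ZMod 2))
          (C : Matrix (Fin n) (Fin r) (ZMod 2)) (c : Fin n → ZMod 2),
          (∀ j : Fin r, DependsOnlyOn (fun x => h x j) (S j)) →
          (∀ x : Fin n → ZMod 2, A.mulVec x = C.mulVec (h x) + c) →
          c₀ * (n : ℝ) ^ 2 / Real.logb 2 n ≤ ((∑ j : Fin r, (S j).card) + nnz C : ℕ) := by
  refine ⟨1 / 14, by norm_num, 2, fun n hn => ?_⟩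
  obtain ⟨A, hA⟩ := exists_forall_lt_nnz_add_nnz (α := Fin n) (β := Fin n) (w := budget n)
    (by simpa using budget_count_lt_two_pow (n := n) (by omega))
  refine ⟨A, fun r S h C c hS hAC => ?_⟩
  have hcost := hA (Fin r) C (linearPart h) (eq_mul_linearPart hAC).symm
  have hfanin := nnz_linearPart_le hS
  calc 1 / 14 * (n : ℝ) ^ 2 / Real.logb 2 n = (n : ℝ) ^ 2 / (14 * Real.logb 2 n) := by ring
    _ ≤ (budget n : ℝ) + 1 := (sq_div_logb_lt_budget_add_one hn).le
    _ ≤ ((∑ j, #(S j) + nnz C : ℕ) : ℝ) := by exact_mod_cast (by omega)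
end

section
/- There is a constant K > 0 such that for every n ≥ 2 and every L with 1 ≤ L ≤ n^2, the cardinality of the set of n-operators f : (Fin n → Bool) → (Fin n → Bool) computable by some general boolean circuit on n inputs of size at most L is at most 2^(2 * n^2 * 4^((L : ℝ)/n) + n * 2^(n-1) + K * n^2 * Real.logb 2 n). -/
/-- A general boolean circuit on `n` inputs with `m` nodes: each gate computes an
arbitrary boolean function of its predecessors; there is no fanin/fanout restriction. -/
structure GenCircuit (n m : ℕ) where
  hnm : n ≤ m
  pred : Fin m → Finset (Fin m)
  out : Fin n → Fin m
  val : (Fin n → Bool) → (Fin m → Bool)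
  pred_lt : ∀ i : Fin m, ∀ j ∈ pred i, j < i
  pred_input : ∀ i : Fin m, (i : ℕ) < n → pred i = ∅
  val_input : ∀ (x : Fin n → Bool) (i : Fin m) (h : (i : ℕ) < n), val x i = x ⟨i, h⟩
  val_gate : ∀ i : Fin m, n ≤ (i : ℕ) → ∀ x y : Fin n → Bool,
    (∀ j ∈ pred i, val x j = val y j) → val x i = val y i

/-- The circuit computes the operator `f` if the value at the `i`-th output node is `f x i`. -/
def GenCircuit.Computes {n m : ℕ} (Φ : GenCircuit n m)
    (f : (Fin n → Bool) → (Fin n → Bool)) : Prop :=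
  ∀ (x : Fin n → Bool) (i : Fin n), Φ.val x (Φ.out i) = f x i

/-- The size of a circuit is its total number of wires. -/
def GenCircuit.size {n m : ℕ} (Φ : GenCircuit n m) : ℕ :=
  ∑ i : Fin m, (Φ.pred i).card

/-!
A counting argument. Gates of fan-in above `n` can be rewired to read the inputs directly, and
constant nodes other than outputs can be dropped (gates absorb their values); this leaves a
circuit on `M = 2n + L` nodes with at most `L` wires and fan-in at most `n`. Such a circuit is
determined by its wiring (at most `L` pairs of nodes: `(M² + 1)^L` choices), its output nodes
(`M^n` choices) and the truth tables of its nodes, `2^(2^k)` choices for fan-in `k`. Since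
`k ↦ 2^k` is convex on `[0, n]`, `n · 2^k ≤ k · 2^n + n`, so the tables contribute at most
`2^(L·2^n/n + M)`. Finally `L·2^n/n ≤ n·2^(n-1)` when `L ≤ n²/2`, while otherwise
`2^n ≤ 4^(L/n)`; everything else is `n^O(n²)`.
-/

open Finset Function

lemma mul_two_pow_le_mul_two_pow {k n : ℕ} (hk : 1 ≤ k) (hkn : k ≤ n) :
    n * 2 ^ k ≤ k * 2 ^ n := by
  induction n, hkn using Nat.le_induction with
  | base => rfl
  | succ n hkn ih =>
    calc (n + 1) * 2 ^ k ≤ 2 * (n * 2 ^ k) := by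
          rw [← mul_assoc]; exact Nat.mul_le_mul_right _ (by omega)
      _ ≤ 2 * (k * 2 ^ n) := by omega
      _ = k * 2 ^ (n + 1) := by ring

lemma mul_sum_two_pow_le {ι : Type*} [Fintype ι] {n : ℕ} (k : ι → ℕ) (hk : ∀ i, k i ≤ n) :
    n * ∑ i, 2 ^ k i ≤ (∑ i, k i) * 2 ^ n + Fintype.card ι * n := by
  have hpoint : ∀ i, n * 2 ^ k i ≤ k i * 2 ^ n + n := fun i => by
    rcases Nat.eq_zero_or_pos (k i) with h | h
    · simp [h]
    · exact le_add_right (mul_two_pow_le_mul_two_pow h (hk i))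
  calc n * ∑ i, 2 ^ k i ≤ ∑ i, (k i * 2 ^ n + n) := by
        rw [mul_sum]; exact sum_le_sum fun i _ => hpoint i
    _ = (∑ i, k i) * 2 ^ n + Fintype.card ι * n := by
        rw [sum_add_distrib, sum_mul, sum_const, card_univ, smul_eq_mul]

lemma card_finset_len_le_le (α : Type*) [Fintype α] (L : ℕ) :
    Fintype.card {W : Finset α // W.card ≤ L} ≤ (Fintype.card α + 1) ^ L := by
  classical
  let enum : {W : Finset α // W.card ≤ L} → Fin L → Option α := fun W i => W.1.toList[(i : ℕ)]?
  have mem_iff : ∀ W a, a ∈ W.1 ↔ ∃ i, enum W i = some a := by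
    intro W a
    rw [← Finset.mem_toList, List.mem_iff_getElem?]
    constructor
    · rintro ⟨i, hi⟩
      have : i < L := by
        have := (List.getElem?_eq_some_iff.1 hi).1
        rw [Finset.length_toList] at this
        exact this.trans_le W.2
      exact ⟨⟨i, this⟩, hi⟩
    · rintro ⟨i, hi⟩
      exact ⟨i, hi⟩
  have hinj : Injective enum := fun W W' h =>
    Subtype.ext (Finset.ext fun a => by rw [mem_iff, mem_iff, h])
  simpa [Fintype.card_fun, Fintype.card_option] using Fintype.card_le_of_injective enum hinj

lemma card_filter_mem_eq_sum {M : ℕ} (P : Fin M → Finset (Fin M)) :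
    (univ.filter (fun q : Fin M × Fin M => q.1 ∈ P q.2)).card = ∑ s, (P s).card := by
  rw [card_filter, Fintype.sum_prod_type_right]
  simp

abbrev Wiring (n M L : ℕ) : Type :=
  {P : Fin M → Finset (Fin M) //
    (∀ s, ∀ p ∈ P s, p < s) ∧ ∑ s, (P s).card ≤ L ∧ ∀ s, (P s).card ≤ n}

lemma card_wiring_le (n M L : ℕ) : Fintype.card (Wiring n M L) ≤ (M * M + 1) ^ L := by
  let wires : Wiring n M L → {W : Finset (Fin M × Fin M) // W.card ≤ L} := fun P =>
    ⟨univ.filter (fun q => q.1 ∈ P.1 q.2), (card_filter_mem_eq_sum P.1).trans_le P.2.2.1⟩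
  have hinj : Injective wires := fun P P' h => by
    have h' := congrArg Subtype.val h
    refine Subtype.ext (funext fun s => Finset.ext fun p => ?_)
    simpa [wires] using congrArg (fun W : Finset (Fin M × Fin M) => (p, s) ∈ W) h'
  calc Fintype.card (Wiring n M L) ≤ _ := Fintype.card_le_of_injective wires hinj
    _ ≤ (M * M + 1) ^ L := by
      simpa using card_finset_len_le_le (Fin M × Fin M) L

abbrev CircuitCode (n M L : ℕ) : Type :=
  Σ P : Wiring n M L, (∀ s, (P.1 s → Bool) → Bool) × (Fin n → Fin M)

def CircuitCode.Realizes {n M L : ℕ} (c : CircuitCode n M L)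
    (f : (Fin n → Bool) → (Fin n → Bool)) : Prop :=
  ∃ v : (Fin n → Bool) → Fin M → Bool,
    (∀ x (s : Fin M) (h : (s : ℕ) < n), v x s = x ⟨s, h⟩) ∧
    (∀ x (s : Fin M), n ≤ (s : ℕ) → v x s = c.2.1 s (fun p => v x p)) ∧
    ∀ x i, v x (c.2.2 i) = f x i

theorem CircuitCode.Realizes.unique {n M L : ℕ} {c : CircuitCode n M L}
    {f g : (Fin n → Bool) → (Fin n → Bool)} (hf : c.Realizes f) (hg : c.Realizes g) :
    f = g := by
  obtain ⟨v, hv_input, hv_gate, hv_out⟩ := hf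
  obtain ⟨w, hw_input, hw_gate, hw_out⟩ := hg
  have hvw : ∀ x s, v x s = w x s := by
    intro x s
    induction s using WellFoundedLT.induction with
    | ind s ih =>
      rcases lt_or_ge (s : ℕ) n with hs | hs
      · rw [hv_input x s hs, hw_input x s hs]
      · rw [hv_gate x s hs, hw_gate x s hs]
        exact congrArg (c.2.1 s) (funext fun p => ih p (c.1.2.1 s p p.2))
  funext x i
  rw [← hv_out, ← hw_out, hvw]

lemma card_circuitCode_le {n : ℕ} (hn : 0 < n) (M L : ℕ) :
    Fintype.card (CircuitCode n M L) ≤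
      (M * M + 1) ^ L * (2 ^ ((L * 2 ^ n + M * n) / n) * M ^ n) := by
  have hfiber : ∀ P : Wiring n M L,
      Fintype.card ((∀ s, (P.1 s → Bool) → Bool) × (Fin n → Fin M)) ≤
        2 ^ ((L * 2 ^ n + M * n) / n) * M ^ n := by
    intro P
    have htables : Fintype.card (∀ s, (P.1 s → Bool) → Bool) = 2 ^ ∑ s, 2 ^ (P.1 s).card := by
      simp [Fintype.card_pi, prod_pow_eq_pow_sum]
    rw [Fintype.card_prod, htables, Fintype.card_fun, Fintype.card_fin, Fintype.card_fin]
    refine Nat.mul_le_mul_right _ (Nat.pow_le_pow_right two_pos ?_)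
    rw [Nat.le_div_iff_mul_le hn, mul_comm]
    calc n * ∑ s, 2 ^ (P.1 s).card ≤ (∑ s, (P.1 s).card) * 2 ^ n + M * n := by
          simpa using mul_sum_two_pow_le (fun s => (P.1 s).card) P.2.2.2
      _ ≤ L * 2 ^ n + M * n := by gcongr; exact P.2.2.1
  rw [Fintype.card_sigma]
  calc ∑ P, Fintype.card _ ≤ ∑ _P : Wiring n M L, 2 ^ ((L * 2 ^ n + M * n) / n) * M ^ n :=
        sum_le_sum fun P _ => hfiber P
    _ ≤ _ := by
      rw [sum_const, card_univ, smul_eq_mul]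
      exact Nat.mul_le_mul_right _ (card_wiring_le n M L)

section rankIn

variable {m : ℕ} {S : Finset (Fin m)} {i j : Fin m}

def rankIn (S : Finset (Fin m)) (i : Fin m) : ℕ := (S.filter (· < i)).card

lemma rankIn_lt_card (hi : i ∈ S) : rankIn S i < S.card :=
  card_lt_card (filter_ssubset.2 ⟨i, hi, lt_irrefl i⟩)

lemma rankIn_lt_rankIn (hj : j ∈ S) (hji : j < i) : rankIn S j < rankIn S i :=
  card_lt_card <| (ssubset_iff_of_subset fun k hk => by
      rw [mem_filter] at hk ⊢; exact ⟨hk.1, hk.2.trans hji⟩).2 ⟨j, by simp [hj, hji], by simp⟩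

lemma rankIn_eq_self (h : ∀ j < i, j ∈ S) : rankIn S i = i := by
  have : S.filter (· < i) = Iio i := ext fun j => by
    simp only [mem_filter, mem_Iio, and_iff_right_iff_imp]; exact h j
  rw [rankIn, this, Fin.card_Iio]

def embedIn {M : ℕ} (hM : S.card ≤ M) (i : S) : Fin M :=
  ⟨rankIn S i, (rankIn_lt_card i.2).trans_le hM⟩

lemma embedIn_strictMono {M : ℕ} (hM : S.card ≤ M) : StrictMono (embedIn hM) :=
  fun j _ hji => Fin.lt_def.2 (rankIn_lt_rankIn j.2 hji)

lemma embedIn_injective {M : ℕ} (hM : S.card ≤ M) : Injective (embedIn hM) :=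
  (embedIn_strictMono hM).injective

end rankIn

namespace GenCircuit

variable {n m : ℕ} (Φ : GenCircuit n m)

lemma val_eq_of_pred_eq_empty {i : Fin m} (hi : n ≤ (i : ℕ)) (h : Φ.pred i = ∅)
    (x y : Fin n → Bool) : Φ.val x i = Φ.val y i :=
  Φ.val_gate i hi x y (by simp [h])

noncomputable def table (s : Fin m) : (Φ.pred s → Bool) → Bool :=
  extend (fun x (p : Φ.pred s) => Φ.val x p) (fun x => Φ.val x s) (fun _ => false)

lemma val_eq_table {s : Fin m} (hs : n ≤ (s : ℕ)) (x : Fin n → Bool) :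
    Φ.val x s = Φ.table s (fun p => Φ.val x p) :=
  (FactorsThrough.extend_apply
    (fun x y h => Φ.val_gate s hs x y fun j hj => congrFun h ⟨j, hj⟩) _ x).symm

noncomputable def code {L : ℕ} (hsize : Φ.size ≤ L) (hfanin : ∀ s, (Φ.pred s).card ≤ n) :
    CircuitCode n m L :=
  ⟨⟨Φ.pred, Φ.pred_lt, hsize, hfanin⟩, Φ.table, Φ.out⟩

lemma code_realizes {L : ℕ} {f : (Fin n → Bool) → (Fin n → Bool)} (hf : Φ.Computes f)
    (hsize : Φ.size ≤ L) (hfanin : ∀ s, (Φ.pred s).card ≤ n) :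
    (Φ.code hsize hfanin).Realizes f :=
  ⟨Φ.val, Φ.val_input, fun x _ hs => Φ.val_eq_table hs x, hf⟩

def inputNodes : Finset (Fin m) := univ.map (Fin.castLEEmb Φ.hnm)

lemma mem_inputNodes {i : Fin m} : i ∈ Φ.inputNodes ↔ (i : ℕ) < n := by
  simp only [inputNodes, mem_map, mem_univ, true_and, Fin.ext_iff, Fin.coe_castLEEmb,
    Fin.val_castLE]
  exact ⟨fun ⟨k, hk⟩ => hk ▸ k.2, fun hi => ⟨⟨i, hi⟩, rfl⟩⟩

lemma card_inputNodes : Φ.inputNodes.card = n := by simp [inputNodes]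

/-- A gate computes a function of the inputs, so a gate of fan-in above `n` may read the
inputs instead. -/
def capFanin : GenCircuit n m where
  hnm := Φ.hnm
  pred i := if n < (Φ.pred i).card then Φ.inputNodes else Φ.pred i
  out := Φ.out
  val := Φ.val
  pred_lt i j hj := by
    split_ifs at hj with h
    · have hi : n ≤ (i : ℕ) := by
        by_contra hi
        simp [Φ.pred_input i (by omega)] at h
      exact Fin.lt_def.2 ((Φ.mem_inputNodes.1 hj).trans_le hi)
    · exact Φ.pred_lt i j hj
  pred_input i hi := by simp [Φ.pred_input i hi]
  val_input := Φ.val_input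
  val_gate i hi x y h := by
    split_ifs at h
    · obtain rfl : x = y := funext fun k => by
        simpa [Φ.val_input] using h (Fin.castLE Φ.hnm k) (Φ.mem_inputNodes.2 k.2)
      rfl
    · exact Φ.val_gate i hi x y h

lemma card_pred_capFanin_le (i : Fin m) :
    (Φ.capFanin.pred i).card ≤ min n (Φ.pred i).card := by
  simp only [capFanin]
  split_ifs with h <;> simp [card_inputNodes] <;> omega

lemma size_capFanin_le : Φ.capFanin.size ≤ Φ.size :=
  sum_le_sum fun i _ => (Φ.card_pred_capFanin_le i).trans (min_le_right _ _)

/-- Every other node is a constant that is not an output. -/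
def essentialNodes : Finset (Fin m) :=
  Φ.inputNodes ∪ univ.filter (fun i => (Φ.pred i).Nonempty) ∪ univ.image Φ.out

lemma card_essentialNodes_le : Φ.essentialNodes.card ≤ n + Φ.size + n := by
  have hgates : (univ.filter fun i => (Φ.pred i).Nonempty).card ≤ Φ.size := by
    rw [card_eq_sum_ones]
    calc ∑ i ∈ univ.filter (fun i => (Φ.pred i).Nonempty), 1
        ≤ ∑ i ∈ univ.filter (fun i => (Φ.pred i).Nonempty), (Φ.pred i).card :=
          sum_le_sum fun i hi => (mem_filter.1 hi).2.card_pos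
      _ ≤ Φ.size := sum_le_sum_of_subset (subset_univ _)
  have houts : (univ.image Φ.out).card ≤ n := card_image_le.trans (by simp)
  calc Φ.essentialNodes.card
      ≤ Φ.inputNodes.card + (univ.filter fun i => (Φ.pred i).Nonempty).card
          + (univ.image Φ.out).card :=
        (card_union_le _ _).trans (by gcongr; exact card_union_le _ _)
    _ ≤ n + Φ.size + n := by rw [card_inputNodes]; omega

lemma input_mem_essentialNodes {i : Fin m} (hi : (i : ℕ) < n) : i ∈ Φ.essentialNodes := by
  simp [essentialNodes, Φ.mem_inputNodes, hi]

lemma out_mem_essentialNodes (k : Fin n) : Φ.out k ∈ Φ.essentialNodes := by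
  simp [essentialNodes]

lemma val_eq_of_not_mem_essentialNodes {i : Fin m} (hi : i ∉ Φ.essentialNodes)
    (x y : Fin n → Bool) : Φ.val x i = Φ.val y i := by
  simp only [essentialNodes, mem_union, Φ.mem_inputNodes, mem_filter, mem_univ, true_and,
    mem_image, not_or, not_nonempty_iff_eq_empty] at hi
  exact Φ.val_eq_of_pred_eq_empty (by omega) hi.1.2 x y

section compress

variable {M : ℕ} (hM : Φ.essentialNodes.card ≤ M)

lemma embedIn_inputNode {i : Fin m} (hi : (i : ℕ) < n) :
    (embedIn hM ⟨i, Φ.input_mem_essentialNodes hi⟩ : ℕ) = i :=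
  rankIn_eq_self fun _ hj => Φ.input_mem_essentialNodes ((Fin.lt_def.1 hj).trans hi)

lemma exists_embedIn_eq_of_lt {s : Fin M} (hs : (s : ℕ) < n) :
    ∃ (i : Fin m) (hi : (i : ℕ) < n), (i : ℕ) = s ∧
      embedIn hM ⟨i, Φ.input_mem_essentialNodes hi⟩ = s :=
  ⟨⟨s, hs.trans_le Φ.hnm⟩, hs, rfl, Fin.ext (Φ.embedIn_inputNode hM hs)⟩

lemma le_of_le_embedIn {i : Φ.essentialNodes} (hi : n ≤ (embedIn hM i : ℕ)) : n ≤ (i : ℕ) := by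
  by_contra h
  rw [Φ.embedIn_inputNode hM (not_le.1 h)] at hi
  omega

/-- Wires from the non-essential (constant) nodes are dropped; the gates absorb their values. -/
noncomputable def compress : GenCircuit n M where
  hnm := Φ.card_inputNodes ▸ (card_le_card (subset_union_left.trans subset_union_left)).trans hM
  pred := extend (embedIn hM)
    (fun i => ((Φ.pred i).subtype (· ∈ Φ.essentialNodes)).map
      ⟨embedIn hM, embedIn_injective hM⟩) (fun _ => ∅)
  out k := embedIn hM ⟨Φ.out k, Φ.out_mem_essentialNodes k⟩
  val x := extend (embedIn hM) (fun i => Φ.val x i) (fun _ => false)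
  pred_lt s p hp := by
    by_cases hs : ∃ i, embedIn hM i = s
    · obtain ⟨i, rfl⟩ := hs
      rw [(embedIn_injective hM).extend_apply] at hp
      obtain ⟨j, hj, rfl⟩ := mem_map.1 hp
      exact embedIn_strictMono hM (Φ.pred_lt i j (mem_subtype.1 hj))
    · simp [extend_apply' _ _ _ hs] at hp
  pred_input s hs := by
    obtain ⟨i, hi, -, rfl⟩ := Φ.exists_embedIn_eq_of_lt hM hs
    simp [(embedIn_injective hM).extend_apply, Φ.pred_input i hi, subtype_eq_empty]
  val_input x s hs := by
    obtain ⟨i, hi, his, rfl⟩ := Φ.exists_embedIn_eq_of_lt hM hs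
    simp [(embedIn_injective hM).extend_apply, Φ.val_input x i hi, his]
  val_gate s hs x y h := by
    by_cases hs' : ∃ i, embedIn hM i = s
    · obtain ⟨i, rfl⟩ := hs'
      simp only [(embedIn_injective hM).extend_apply]
      refine Φ.val_gate i (Φ.le_of_le_embedIn hM hs) x y fun j hj => ?_
      by_cases hjS : j ∈ Φ.essentialNodes
      · have := h (embedIn hM ⟨j, hjS⟩) (by
          rw [(embedIn_injective hM).extend_apply]
          exact mem_map_of_mem _ (mem_subtype.2 hj))
        simpa [(embedIn_injective hM).extend_apply] using this
      · exact Φ.val_eq_of_not_mem_essentialNodes hjS x y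
    · simp [extend_apply' _ _ _ hs']

lemma compress_pred_embedIn (i : Φ.essentialNodes) :
    (Φ.compress hM).pred (embedIn hM i) =
      ((Φ.pred i).subtype (· ∈ Φ.essentialNodes)).map
        ⟨embedIn hM, embedIn_injective hM⟩ := by
  simp only [compress]
  exact (embedIn_injective hM).extend_apply _ _ i

lemma compress_computes {f : (Fin n → Bool) → (Fin n → Bool)} (hf : Φ.Computes f) :
    (Φ.compress hM).Computes f := fun x k => by
  simp only [compress]
  exact ((embedIn_injective hM).extend_apply _ _ _).trans (hf x k)

lemma card_compress_pred_le {k : ℕ} (hk : ∀ i, (Φ.pred i).card ≤ k) (s : Fin M) :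
    ((Φ.compress hM).pred s).card ≤ k := by
  by_cases hs : ∃ i, embedIn hM i = s
  · obtain ⟨i, rfl⟩ := hs
    rw [compress_pred_embedIn, card_map, card_subtype]
    exact (card_filter_le _ _).trans (hk i)
  · simp [compress, extend_apply' _ _ _ hs]

lemma size_compress_le : (Φ.compress hM).size ≤ Φ.size := by
  have hsum : ∑ i : Φ.essentialNodes, ((Φ.compress hM).pred (embedIn hM i)).card =
      (Φ.compress hM).size := by
    refine Fintype.sum_of_injective _ (embedIn_injective hM) _ _ (fun s hs => ?_)
      fun _ => rfl
    simp [compress, extend_apply' _ _ _ hs]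
  calc (Φ.compress hM).size
      = ∑ i : Φ.essentialNodes, ((Φ.compress hM).pred (embedIn hM i)).card := hsum.symm
    _ ≤ ∑ i : Φ.essentialNodes, (Φ.pred i).card := sum_le_sum fun i _ => by
        rw [compress_pred_embedIn, card_map, card_subtype]; exact card_filter_le _ _
    _ = ∑ i ∈ Φ.essentialNodes, (Φ.pred i).card :=
        Finset.sum_coe_sort Φ.essentialNodes fun i => (Φ.pred i).card
    _ ≤ Φ.size := sum_le_sum_of_subset (subset_univ _)

end compress

theorem exists_normalForm {L : ℕ} {f : (Fin n → Bool) → (Fin n → Bool)} (hf : Φ.Computes f)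
    (hsize : Φ.size ≤ L) :
    ∃ Ψ : GenCircuit n (2 * n + L), Ψ.Computes f ∧ Ψ.size ≤ L ∧ ∀ s, (Ψ.pred s).card ≤ n := by
  have hM : Φ.capFanin.essentialNodes.card ≤ 2 * n + L := by
    have := Φ.capFanin.card_essentialNodes_le
    have := Φ.size_capFanin_le
    omega
  refine ⟨Φ.capFanin.compress hM, Φ.capFanin.compress_computes hM hf,
    (Φ.capFanin.size_compress_le hM).trans (Φ.size_capFanin_le.trans hsize),
    Φ.capFanin.card_compress_pred_le hM fun i => ?_⟩
  exact (Φ.card_pred_capFanin_le i).trans (min_le_left _ _)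

end GenCircuit

theorem card_computable_le (n L : ℕ) (hn : 0 < n) :
    Nat.card {f : (Fin n → Bool) → (Fin n → Bool) //
        ∃ (m : ℕ) (Φ : GenCircuit n m), Φ.Computes f ∧ Φ.size ≤ L} ≤
      ((2 * n + L) * (2 * n + L) + 1) ^ L *
        (2 ^ ((L * 2 ^ n + (2 * n + L) * n) / n) * (2 * n + L) ^ n) := by
  have hcode : ∀ f : {f : (Fin n → Bool) → (Fin n → Bool) //
      ∃ (m : ℕ) (Φ : GenCircuit n m), Φ.Computes f ∧ Φ.size ≤ L},
      ∃ c : CircuitCode n (2 * n + L) L, c.Realizes f := by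
    rintro ⟨f, m, Φ, hf, hsize⟩
    obtain ⟨Ψ, hΨ, hΨsize, hΨfanin⟩ := Φ.exists_normalForm hf hsize
    exact ⟨Ψ.code hΨsize hΨfanin, Ψ.code_realizes hΨ hΨsize hΨfanin⟩
  choose code hcode using hcode
  calc Nat.card _ ≤ Nat.card (CircuitCode n (2 * n + L) L) :=
        Nat.card_le_card_of_injective code fun f g h =>
          Subtype.ext ((hcode f).unique (h ▸ hcode g))
    _ = Fintype.card (CircuitCode n (2 * n + L) L) := Nat.card_eq_fintype_card
    _ ≤ _ := card_circuitCode_le hn _ _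

lemma polynomial_factors_le {n L : ℕ} (hn : 2 ≤ n) (hL : L ≤ n ^ 2) :
    ((2 * n + L) * (2 * n + L) + 1) ^ L * (2 * n + L) ^ n * 2 ^ (2 * n + L) ≤
      n ^ (12 * n ^ 2) := by
  have hn1 : 1 ≤ n := by omega
  have hM2 : 2 * n + L ≤ 2 * n ^ 2 := by nlinarith
  have hM3 : 2 * n + L ≤ n ^ 3 := hM2.trans (by rw [pow_succ]; nlinarith)
  have hwires : (2 * n + L) * (2 * n + L) + 1 ≤ n ^ 7 := by
    have : (2 * n + L) * (2 * n + L) ≤ n ^ 6 := by nlinarith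
    have : 2 * n ^ 6 ≤ n ^ 7 := by rw [pow_succ]; nlinarith
    have : 0 < n ^ 6 := by positivity
    omega
  have hnn : n ≤ n ^ 2 := by nlinarith
  calc ((2 * n + L) * (2 * n + L) + 1) ^ L * (2 * n + L) ^ n * 2 ^ (2 * n + L)
      ≤ (n ^ 7) ^ L * (n ^ 3) ^ n * n ^ (2 * n + L) := by gcongr
    _ ≤ n ^ (7 * n ^ 2) * n ^ (3 * n ^ 2) * n ^ (2 * n ^ 2) := by
        rw [← pow_mul, ← pow_mul]
        gcongr
    _ = n ^ (12 * n ^ 2) := by rw [← pow_add, ← pow_add]; ring_nf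

lemma mul_two_pow_div_le {n L : ℕ} (hn : 0 < n) (hL : L ≤ n ^ 2) :
    (L : ℝ) * 2 ^ n / n ≤ 2 * (n : ℝ) ^ 2 * (4 : ℝ) ^ ((L : ℝ) / n) + n * 2 ^ (n - 1) := by
  have hn' : (1 : ℝ) ≤ n := by exact_mod_cast hn
  have htwo : (2 : ℝ) ^ n = 2 * 2 ^ (n - 1) := by rw [← pow_succ']; congr 1; omega
  rcases le_or_gt (2 * L) (n ^ 2) with hfew | hmany
  · have hfew' : 2 * (L : ℝ) ≤ n ^ 2 := by exact_mod_cast hfew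
    have : (L : ℝ) * 2 ^ n / n ≤ n * 2 ^ (n - 1) := by
      rw [div_le_iff₀ (by positivity), htwo]
      have : (0 : ℝ) < 2 ^ (n - 1) := by positivity
      nlinarith
    have : 0 ≤ 2 * (n : ℝ) ^ 2 * (4 : ℝ) ^ ((L : ℝ) / n) := by positivity
    linarith
  · have hmany' : (n : ℝ) ^ 2 < 2 * L := by exact_mod_cast hmany
    have hexp : (2 : ℝ) ^ n ≤ (4 : ℝ) ^ ((L : ℝ) / n) := by
      rw [show (4 : ℝ) = 2 ^ (2 : ℝ) by norm_num, ← Real.rpow_mul (by norm_num),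
        ← Real.rpow_natCast]
      refine Real.rpow_le_rpow_of_exponent_le (by norm_num) ?_
      rw [mul_div_assoc', le_div_iff₀ (by positivity)]
      nlinarith
    have hratio : (L : ℝ) / n ≤ n := by
      rw [div_le_iff₀ (by positivity)]; exact_mod_cast (show L ≤ n * n by nlinarith)
    have : 0 ≤ (n : ℝ) * 2 ^ (n - 1) := by positivity
    calc (L : ℝ) * 2 ^ n / n = (L / n) * 2 ^ n := by ring
      _ ≤ n * (4 : ℝ) ^ ((L : ℝ) / n) := by gcongr
      _ ≤ 2 * (n : ℝ) ^ 2 * (4 : ℝ) ^ ((L : ℝ) / n) := by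
          gcongr
          nlinarith
      _ ≤ _ := by linarith

lemma natCast_pow_eq_two_rpow {n : ℕ} (hn : 0 < n) (k : ℕ) :
    (n : ℝ) ^ k = 2 ^ (k * Real.logb 2 n) := by
  rw [mul_comm, Real.rpow_mul zero_le_two,
    Real.rpow_logb two_pos (by norm_num) (by exact_mod_cast hn), Real.rpow_natCast]

theorem card_computable_le_two_rpow {n L : ℕ} (hn : 2 ≤ n) (hL : L ≤ n ^ 2) :
    (Nat.card {f : (Fin n → Bool) → (Fin n → Bool) //
        ∃ (m : ℕ) (Φ : GenCircuit n m), Φ.Computes f ∧ Φ.size ≤ L} : ℝ) ≤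
      2 ^ ((L : ℝ) * 2 ^ n / n + 12 * (n : ℝ) ^ 2 * Real.logb 2 n) := by
  set M := 2 * n + L
  set B := (L * 2 ^ n + M * n) / n
  have htables : (2 : ℝ) ^ B ≤ 2 ^ M * 2 ^ ((L : ℝ) * 2 ^ n / n) := by
    have : (B : ℝ) ≤ M + L * 2 ^ n / n := by
      calc (B : ℝ) ≤ ((L * 2 ^ n + M * n : ℕ) : ℝ) / n := Nat.cast_div_le
        _ = M + L * 2 ^ n / n := by field_simp; push_cast; ring
    rw [← Real.rpow_natCast, ← Real.rpow_natCast 2 M, ← Real.rpow_add two_pos]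
    exact Real.rpow_le_rpow_of_exponent_le one_le_two this
  have hpoly : ((M * M + 1) ^ L * M ^ n * 2 ^ M : ℝ) ≤
      2 ^ (12 * (n : ℝ) ^ 2 * Real.logb 2 n) := by
    calc ((M * M + 1) ^ L * M ^ n * 2 ^ M : ℝ) ≤ (n : ℝ) ^ (12 * n ^ 2) := by
          exact_mod_cast polynomial_factors_le hn hL
      _ = _ := by rw [natCast_pow_eq_two_rpow (by omega)]; push_cast; ring_nf
  calc (Nat.card _ : ℝ) ≤ (M * M + 1) ^ L * (2 ^ B * M ^ n) := by
        exact_mod_cast card_computable_le n L (by omega)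
    _ = (M * M + 1) ^ L * M ^ n * 2 ^ B := by ring
    _ ≤ (M * M + 1) ^ L * M ^ n * (2 ^ M * 2 ^ ((L : ℝ) * 2 ^ n / n)) := by gcongr
    _ = (M * M + 1) ^ L * M ^ n * 2 ^ M * 2 ^ ((L : ℝ) * 2 ^ n / n) := by ring
    _ ≤ 2 ^ (12 * (n : ℝ) ^ 2 * Real.logb 2 n) * 2 ^ ((L : ℝ) * 2 ^ n / n) := by gcongr
    _ = _ := by rw [← Real.rpow_add two_pos, add_comm]

/-- The number of `n`-operators computable by a general circuit with at most `L` wires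
is at most `2^(2n²·4^(L/n) + n·2^(n-1) + K·n²·log₂ n)`. -/
theorem card_operators_computable_with_L_wires_le :
    ∃ K : ℝ, K > 0 ∧ ∀ n ≥ 2, ∀ L : ℕ, 1 ≤ L → L ≤ n ^ 2 →
      (Nat.card {f : (Fin n → Bool) → (Fin n → Bool) //
          ∃ (m : ℕ) (Φ : GenCircuit n m), Φ.Computes f ∧ Φ.size ≤ L} : ℝ)
        ≤ (2 : ℝ) ^ (2 * (n : ℝ) ^ 2 * (4 : ℝ) ^ ((L : ℝ) / (n : ℝ))
            + (n : ℝ) * 2 ^ (n - 1) + K * (n : ℝ) ^ 2 * Real.logb 2 n) := by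
  refine ⟨12, by norm_num, fun n hn L _ hL => ?_⟩
  refine (card_computable_le_two_rpow hn hL).trans
    (Real.rpow_le_rpow_of_exponent_le one_le_two ?_)
  linarith [mul_two_pow_div_le (n := n) (L := L) (by omega) hL]
end
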